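/- Let δ > 0 and let c be a positive integer. Then there exist universal constants c₁, c₂ > 0 such that there is a ReLU network N : ℝ² → ℝ of width at most 4, depth at most c₁ · c², and all weights bounded in absolute value by c₂ · 2^c / δ, such that with probability at least 1 − δ over x drawn uniformly from [0,1], one has N(x, y) = ⌊x · 2^c⌋ + y for every y ∈ [0,1]. -/

import Mathlib

open scoped BigOperators

noncomputable section

/-- The ReLU activation function. -/
def relu (x : ℝ) : ℝ := max 0 x

/-- One affine layer of a neural network: a weight matrix and a bias vector. -/
structure Layer (nin nout : ℕ) where
  W : Matrix (Fin nout) (Fin nin) ℝ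
  b : Fin nout → ℝ

/-- The affine map computed by a layer. -/
def Layer.affine {nin nout : ℕ} (l : Layer nin nout) (x : Fin nin → ℝ) : Fin nout → ℝ :=
  fun i => (∑ j, l.W i j * x j) + l.b i

/-- A ReLU network: a nonempty sequence of affine layers; ReLU is applied after
every layer except the last one. -/
inductive Net : ℕ → ℕ → Type
  | last {nin nout : ℕ} : Layer nin nout → Net nin nout
  | cons {nin k nout : ℕ} : Layer nin k → Net k nout → Net nin nout

namespace Net

/-- Evaluation of a ReLU network. -/
def eval : {nin nout : ℕ} → Net nin nout → (Fin nin → ℝ) → (Fin nout → ℝ)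
  | _, _, .last l, x => l.affine x
  | _, _, .cons l rest, x => rest.eval (fun i => relu (l.affine x i))

/-- The depth (number of layers) of a network. -/
def depth : {nin nout : ℕ} → Net nin nout → ℕ
  | _, _, .last _ => 1
  | _, _, .cons _ rest => rest.depth + 1

/-- The width of a network: the maximum of the input dimension and all
intermediate layer dimensions. -/
def width : {nin nout : ℕ} → Net nin nout → ℕ
  | nin, _, .last _ => nin
  | nin, _, .cons _ rest => max nin rest.width

/-- The number of parameters of a network: the total number of entries of all
weight matrices and bias vectors. -/
def params : {nin nout : ℕ} → Net nin nout → ℕ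
  | nin, nout, .last _ => nout * nin + nout
  | nin, _, .cons (k := k) _ rest => (k * nin + k) + rest.params

/-- All weights (matrix entries and biases) of the network lie in the set `s`. -/
def weightsIn (s : Set ℝ) : {nin nout : ℕ} → Net nin nout → Prop
  | _, _, .last l => (∀ i j, l.W i j ∈ s) ∧ (∀ i, l.b i ∈ s)
  | _, _, .cons l rest => ((∀ i j, l.W i j ∈ s) ∧ (∀ i, l.b i ∈ s)) ∧ rest.weightsIn s

/-- The bias vector of the output layer of a network. -/
def lastBias : {nin nout : ℕ} → Net nin nout → (Fin nout → ℝ)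
  | _, _, .last l => l.b
  | _, _, .cons _ rest => rest.lastBias

end Net

/-- `BIN a b m` is the integer formed by bits `a` through `b` (1-indexed from the
least significant bit) of the binary representation of `m`. -/
def BIN (a b m : ℕ) : ℕ := (m / 2^(a-1)) % 2^(b - a + 1)

end


noncomputable section Aux

open Set

/-- First layer of a bit-extraction step. Input `(t,s)`, output
`(t, s, relu((t-1/2)/ε), relu((t-1/2)/ε - 1))`. -/
def layerA (ε : ℝ) : Layer 2 4 where
  W := !![1, 0; 0, 1; 1/ε, 0; 1/ε, 0]
  b := ![0, 0, -(1/(2*ε)), -(1/(2*ε)) - 1]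

/-- Second layer of a bit-extraction step: `(t,s,u,v) ↦ (2t - u + v, s + w(u-v))`. -/
def layerB (w : ℝ) : Layer 4 2 where
  W := !![2, 0, -1, 1; 0, 1, w, -w]
  b := ![0, 0]

/-- Output layer: `(t,s) ↦ s`. -/
def lastL : Layer 2 1 where
  W := !![0, 1]
  b := ![0]

def mkNet (ε : ℝ) : ℕ → ℝ → Net 2 1
  | 0, _ => .last lastL
  | n+1, w => .cons (layerA ε) (.cons (layerB w) (mkNet ε n (w/2)))

lemma mkNet_depth (ε : ℝ) : ∀ n w, (mkNet ε n w).depth = 2*n + 1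
  | 0, _ => rfl
  | n+1, w => by simp [mkNet, Net.depth, mkNet_depth ε n (w/2)]; ring

lemma mkNet_width (ε : ℝ) : ∀ n w, (mkNet ε n w).width ≤ 4
  | 0, _ => by simp [mkNet, Net.width]
  | n+1, w => by
      simp only [mkNet, Net.width]
      have := mkNet_width ε n (w/2)
      omega

lemma mkNet_weights (ε B : ℝ) (hε0 : 0 < ε) (hB2 : 2 ≤ B) (hε : 1/ε ≤ B)
    (hε2 : 1/(2*ε) + 1 ≤ B) :
    ∀ n w, 0 ≤ w → w ≤ B → (mkNet ε n w).weightsIn (Set.Icc (-B) B) := by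
  have k1 : (0:ℝ) ≤ ε⁻¹ := by positivity
  have k2 : (0:ℝ) ≤ (2*ε)⁻¹ := by positivity
  have k3 : ε⁻¹ ≤ B := by rwa [one_div] at hε
  have k4 : (2*ε)⁻¹ + 1 ≤ B := by rwa [one_div] at hε2
  intro n
  induction n with
  | zero =>
      intro w _ _
      refine ⟨fun i j => ?_, fun i => ?_⟩ <;>
        · fin_cases i
          all_goals try fin_cases j
          all_goals simp [lastL, Set.mem_Icc, Matrix.cons_val_succ, Matrix.vecHead, Matrix.vecTail]
          all_goals first | (constructor <;> linarith) | linarith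
  | succ n ih =>
      intro w hw0 hwB
      refine ⟨⟨fun i j => ?_, fun i => ?_⟩, ⟨fun i j => ?_, fun i => ?_⟩,
        ih (w/2) (by linarith) (by linarith)⟩ <;>
        · fin_cases i
          all_goals try fin_cases j
          all_goals simp [layerA, layerB, Set.mem_Icc, Matrix.cons_val_succ, Matrix.vecHead, Matrix.vecTail]
          all_goals first | (constructor <;> linarith) | linarith

lemma evalA (ε t s : ℝ) :
    (fun i => relu ((layerA ε).affine ![t, s] i)) =
      ![relu t, relu s, relu ((1/ε)*t - 1/(2*ε)), relu ((1/ε)*t - (1/(2*ε) + 1))] := by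
  funext i
  fin_cases i <;>
    simp [layerA, Layer.affine, Fin.sum_univ_two, relu, Matrix.cons_val_succ, Matrix.vecHead, Matrix.vecTail] <;> ring_nf

lemma evalB (w t s u v : ℝ) :
    (fun i => relu ((layerB w).affine ![t, s, u, v] i)) =
      ![relu (2*t - u + v), relu (s + w*(u - v))] := by
  funext i
  fin_cases i <;>
    simp [layerB, Layer.affine, Fin.sum_univ_four, relu, Matrix.cons_val_succ, Matrix.vecHead, Matrix.vecTail] <;> ring_nf

lemma evalLast (t s : ℝ) : (Net.last lastL).eval ![t, s] 0 = s := by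
  simp [Net.eval, lastL, Layer.affine, Fin.sum_univ_two]

lemma relu_of_nonneg {x : ℝ} (h : 0 ≤ x) : relu x = x := max_eq_right h
lemma relu_of_nonpos {x : ℝ} (h : x ≤ 0) : relu x = 0 := max_eq_left h

lemma mkNet_eval (ε : ℝ) (hε : 0 < ε) :
    ∀ (n : ℕ) (w t s : ℝ), 0 ≤ w → t ∈ Set.Ico (0:ℝ) 1 → 0 ≤ s →
    (∀ i < n, Int.fract (2^i * t) ∉ Set.Ico (1/2 : ℝ) (1/2 + ε)) →
    (mkNet ε n w).eval ![t, s] 0 = s + 2*w*(⌊2^n * t⌋ : ℝ)/2^n := by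
  intro n
  induction n with
  | zero =>
      intro w t s hw ht hs _
      have h : ⌊(2:ℝ)^0 * t⌋ = 0 := by
        rw [pow_zero, one_mul]
        exact Int.floor_eq_zero_iff.2 (by simpa [Set.mem_Ico] using ht)
      show (Net.last lastL).eval ![t, s] 0 = _
      rw [evalLast, h]
      norm_num
  | succ n ih =>
      intro w t s hw ht hs hgood
      obtain ⟨ht0, ht1⟩ := ht
      have hfr : Int.fract t = t := Int.fract_eq_self.2 ⟨ht0, ht1⟩
      have h0 : t ∉ Set.Ico (1/2 : ℝ) (1/2 + ε) := by
        have := hgood 0 (Nat.succ_pos n); simpa [hfr] using this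
      simp only [mkNet, Net.eval, evalA]
      rw [relu_of_nonneg ht0, relu_of_nonneg hs, evalB]
      have hgood' : ∀ b : ℤ, ∀ i < n,
          Int.fract (2^i * (2*t - b)) ∉ Set.Ico (1/2 : ℝ) (1/2 + ε) := by
        intro b i hi
        have : Int.fract (2^i * (2*t - (b:ℝ))) = Int.fract (2^(i+1) * t) := by
          have : (2:ℝ)^i * (2*t - b) = 2^(i+1) * t - ((2^i * b : ℤ) : ℝ) := by
            push_cast; ring
          rw [this, Int.fract_sub_intCast]
        rw [this]
        exact hgood (i+1) (by omega)
      have huval : (1/ε)*t - 1/(2*ε) = (t - 1/2)/ε := by field_simp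
      by_cases hc : t < 1/2
      · -- bit is 0
        have hu : (1/ε)*t - 1/(2*ε) ≤ 0 := by
          rw [huval]
          exact div_nonpos_of_nonpos_of_nonneg (by linarith) hε.le
        have hv : (1/ε)*t - (1/(2*ε) + 1) ≤ 0 := by linarith
        rw [relu_of_nonpos hu, relu_of_nonpos hv]
        have h2t : 2*t - 0 + 0 = 2*t := by ring
        have hs' : s + w*((0:ℝ) - 0) = s := by ring
        rw [h2t, hs', relu_of_nonneg (by linarith : (0:ℝ) ≤ 2*t), relu_of_nonneg hs]
        rw [ih (w/2) (2*t) s (by linarith) ⟨by linarith, by linarith⟩ hs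
          (by simpa using hgood' 0)]
        have : (2:ℝ)^(n+1) * t = 2^n * (2*t) := by ring
        rw [← this]
        field_simp
        ring
      · -- bit is 1
        push_neg at hc
        have htε : 1/2 + ε ≤ t := by
          rcases lt_or_ge t (1/2 + ε) with h | h
          · exact absurd ⟨hc, h⟩ h0
          · exact h
        have hu1 : 1 ≤ (1/ε)*t - 1/(2*ε) := by
          rw [huval, le_div_iff₀ hε]
          linarith
        have hru : relu ((1/ε)*t - 1/(2*ε)) = (1/ε)*t - 1/(2*ε) :=
          relu_of_nonneg (by linarith)
        have hrv : relu ((1/ε)*t - (1/(2*ε) + 1)) = (1/ε)*t - (1/(2*ε) + 1) :=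
          relu_of_nonneg (by linarith)
        rw [hru, hrv]
        have e1 : 2*t - ((1/ε)*t - 1/(2*ε)) + ((1/ε)*t - (1/(2*ε) + 1)) = 2*t - 1 := by
          ring
        have e2 : s + w*(((1/ε)*t - 1/(2*ε)) - ((1/ε)*t - (1/(2*ε) + 1))) = s + w := by
          ring
        rw [e1, e2, relu_of_nonneg (by linarith : (0:ℝ) ≤ 2*t - 1),
          relu_of_nonneg (by linarith : (0:ℝ) ≤ s + w)]
        rw [ih (w/2) (2*t - 1) (s + w) (by linarith) ⟨by linarith, by linarith⟩
          (by linarith) (by simpa using hgood' 1)]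
        have hfl : ⌊(2:ℝ)^n * (2*t - 1)⌋ = ⌊(2:ℝ)^(n+1) * t⌋ - 2^n := by
          have : (2:ℝ)^n * (2*t - 1) = 2^(n+1) * t - ((2^n : ℤ) : ℝ) := by
            push_cast; ring
          rw [this, Int.floor_sub_intCast]
        rw [hfl]
        push_cast
        field_simp
        ring

/-- The "bad" set at scale `i`. -/
def badSet (ε : ℝ) (i : ℕ) : Set ℝ :=
  {x : ℝ | x ∈ Set.Icc (0:ℝ) 1 ∧ Int.fract (2^i * x) ∈ Set.Ico (1/2 : ℝ) (1/2 + ε)}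

lemma badSet_subset (ε : ℝ) (i : ℕ) :
    badSet ε i ⊆ ⋃ k ∈ Finset.range (2^i + 1),
      Set.Ico (((k:ℝ) + 1/2)/2^i) (((k:ℝ) + 1/2 + ε)/2^i) := by
  rintro x ⟨⟨hx0, hx1⟩, hf1, hf2⟩
  have h2 : (0:ℝ) < 2^i := by positivity
  set m := ⌊(2:ℝ)^i * x⌋ with hm
  have hm0 : 0 ≤ m := Int.floor_nonneg.2 (by positivity)
  have hmle : m ≤ 2^i := by
    have hle : (2:ℝ)^i * x ≤ ((2^i : ℤ) : ℝ) := by push_cast; nlinarith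
    have := Int.floor_le_floor hle
    rwa [Int.floor_intCast] at this
  have hmre : ((m.toNat : ℕ) : ℝ) = (m : ℝ) := by
    exact_mod_cast congrArg (fun z : ℤ => (z : ℝ)) (Int.toNat_of_nonneg hm0)
  have hfr : Int.fract ((2:ℝ)^i * x) = 2^i * x - m := rfl
  rw [hfr] at hf1 hf2
  have hcast2 : ((2^i : ℕ) : ℤ) = 2^i := by push_cast; ring
  have hk : m.toNat ∈ Finset.range (2^i + 1) := Finset.mem_range.2 (by omega)
  refine Set.mem_biUnion hk ?_
  · constructor
    · rw [div_le_iff₀ h2]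
      rw [hmre]
      rw [mul_comm]
      linarith
    · rw [lt_div_iff₀ h2]
      rw [hmre]
      rw [mul_comm]
      linarith

lemma badSet_volume (ε : ℝ) (hε : 0 < ε) (i : ℕ) :
    MeasureTheory.volume (badSet ε i) ≤ ENNReal.ofReal (2*ε) := by
  refine le_trans (MeasureTheory.measure_mono (badSet_subset ε i)) ?_
  refine le_trans (MeasureTheory.measure_biUnion_finset_le _ _) ?_
  have h2 : (0:ℝ) < 2^i := by positivity
  have hvol : ∀ k : ℕ,
      MeasureTheory.volume (Set.Ico (((k:ℝ) + 1/2)/2^i) (((k:ℝ) + 1/2 + ε)/2^i)) =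
        ENNReal.ofReal (ε/2^i) := by
    intro k
    rw [Real.volume_Ico]
    congr 1
    field_simp
    ring
  simp only [hvol, Finset.sum_const, Finset.card_range, nsmul_eq_mul]
  rw [← ENNReal.ofReal_natCast, ← ENNReal.ofReal_mul (by positivity)]
  apply ENNReal.ofReal_le_ofReal
  have h1 : (1:ℝ) ≤ 2^i := one_le_pow₀ (by norm_num)
  have hd : ε/2^i ≤ ε := div_le_self hε.le h1
  have hcast : ((2^i + 1 : ℕ) : ℝ) = 2^i + 1 := by push_cast; ring
  rw [hcast]
  have : ((2:ℝ)^i + 1) * (ε/2^i) = ε + ε/2^i := by field_simp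
  rw [this]
  linarith

end Aux

theorem stmt11 :
    ∃ c₁ c₂ : ℝ, 0 < c₁ ∧ 0 < c₂ ∧
    ∀ (c : ℕ), 0 < c → ∀ δ : ℝ, 0 < δ →
    ∃ N : Net 2 1,
      N.width ≤ 4 ∧
      (N.depth : ℝ) ≤ c₁ * (c : ℝ)^2 ∧
      N.weightsIn (Set.Icc (-(c₂ * 2^c / δ)) (c₂ * 2^c / δ)) ∧
      ENNReal.ofReal (1 - δ) ≤
        MeasureTheory.volume {x ∈ Set.Icc (0 : ℝ) 1 |
          ∀ y ∈ Set.Icc (0 : ℝ) 1,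
            N.eval ![x, y] 0 = ((⌊x * 2^c⌋ : ℤ) : ℝ) + y} := by
  refine ⟨4, 4, by norm_num, by norm_num, ?_⟩
  intro c hc δ hδ
  have hB0 : (0:ℝ) < 4 * 2^c / δ := by positivity
  by_cases hδ1 : 1 ≤ δ
  · -- trivial case: the conclusion probability bound is vacuous
    refine ⟨.last ⟨0, 0⟩, ?_, ?_, ?_, ?_⟩
    · simp [Net.width]
    · have : (1:ℝ) ≤ 4 * (c:ℝ)^2 := by
        have : (1:ℝ) ≤ (c:ℝ) := by exact_mod_cast hc
        nlinarith
      simpa [Net.depth] using this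
    · exact ⟨fun i j => by simp [Set.mem_Icc]; first | (constructor <;> linarith) | linarith,
        fun i => by simp [Set.mem_Icc]; first | (constructor <;> linarith) | linarith⟩
    · have : ENNReal.ofReal (1 - δ) = 0 := by
        rw [ENNReal.ofReal_eq_zero]
        linarith
      rw [this]
      exact zero_le
  · push_neg at hδ1
    have hcR : (1:ℝ) ≤ (c:ℝ) := by exact_mod_cast hc
    have hc2 : (c:ℝ) ≤ 2^c := by exact_mod_cast (Nat.lt_two_pow_self (n := c)).le
    have h1 : (1:ℝ) ≤ 2^c := one_le_pow₀ (by norm_num)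
    set ε : ℝ := δ / (4*c) with hεdef
    have hε0 : 0 < ε := by positivity
    set B : ℝ := 4 * 2^c / δ with hBdef
    have hinv : 1/ε = 4*c/δ := by rw [hεdef, one_div_div]
    have h2ε : 2*ε = δ/(2*c) := by rw [hεdef]; field_simp; ring
    have hinv2 : 1/(2*ε) = 2*c/δ := by rw [h2ε, one_div_div]
    have hεB : 1/ε ≤ B := by
      rw [hinv, hBdef]
      gcongr
    have hε2B : 1/(2*ε) + 1 ≤ B := by
      rw [hinv2, hBdef, div_add' _ _ _ hδ.ne', div_le_div_iff₀ hδ hδ]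
      nlinarith
    have hB2 : (2:ℝ) ≤ B := by
      rw [hBdef, le_div_iff₀ hδ]
      nlinarith
    refine ⟨mkNet ε c ((2:ℝ)^c / 2), mkNet_width ε c _, ?_, ?_, ?_⟩
    · rw [mkNet_depth]
      push_cast
      nlinarith
    · exact mkNet_weights ε B hε0 hB2 hεB hε2B c _ (by positivity) (by
        rw [hBdef, le_div_iff₀ hδ]; nlinarith)
    · -- the measure bound
      set Bad : Set ℝ := ⋃ i ∈ Finset.range c, badSet ε i with hBad
      have hGsub : Set.Ico (0:ℝ) 1 \ Bad ⊆ {x ∈ Set.Icc (0:ℝ) 1 |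
          ∀ y ∈ Set.Icc (0:ℝ) 1,
            (mkNet ε c ((2:ℝ)^c / 2)).eval ![x, y] 0 = ((⌊x * 2^c⌋ : ℤ) : ℝ) + y} := by
        rintro x ⟨hx, hxB⟩
        refine ⟨⟨hx.1, hx.2.le⟩, fun y hy => ?_⟩
        have hgood : ∀ i < c, Int.fract (2^i * x) ∉ Set.Ico (1/2 : ℝ) (1/2 + ε) := by
          intro i hi hmem
          exact hxB (Set.mem_biUnion (Finset.mem_range.2 hi)
            ⟨⟨hx.1, hx.2.le⟩, hmem⟩)
        rw [mkNet_eval ε hε0 c ((2:ℝ)^c / 2) x y (by positivity) hx hy.1 hgood,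
          mul_comm x ((2:ℝ)^c)]
        field_simp
        ring
      have hBadVol : MeasureTheory.volume Bad ≤ ENNReal.ofReal δ := by
        refine le_trans (MeasureTheory.measure_biUnion_finset_le _ _) ?_
        refine le_trans (Finset.sum_le_sum fun i _ => badSet_volume ε hε0 i) ?_
        rw [Finset.sum_const, Finset.card_range, nsmul_eq_mul,
          ← ENNReal.ofReal_natCast, ← ENNReal.ofReal_mul (by positivity)]
        apply ENNReal.ofReal_le_ofReal
        rw [h2ε]
        rw [mul_div_assoc']
        rw [div_le_iff₀ (by positivity)]
        nlinarith
      calc ENNReal.ofReal (1 - δ)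
          = ENNReal.ofReal 1 - ENNReal.ofReal δ := ENNReal.ofReal_sub 1 hδ.le
        _ ≤ MeasureTheory.volume (Set.Ico (0:ℝ) 1) - MeasureTheory.volume Bad := by
            rw [Real.volume_Ico]
            exact tsub_le_tsub (by norm_num) hBadVol
        _ ≤ MeasureTheory.volume (Set.Ico (0:ℝ) 1 \ Bad) :=
            MeasureTheory.le_measure_diff
        _ ≤ _ := MeasureTheory.measure_mono hGsub
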